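/- Drift bound between synchronizations for asynchronous local updates: Assume ητ ≤ 1/2. For any given δ ∈ (0,1), with probability at least 1-δ, simultaneously for all agents k ∈ {1,…,K} and all 0 ≤ u < T, ‖Q_u^k − Q_{ι(u)}^k‖_∞ ≤ 2ητ ‖Δ_{ι(u)}^k‖_∞ + (8γη√(τ-1)/(1-γ)) · sqrt(log(2|S||A|TK/δ)), where Δ_v^k = Q* − Q_v^k and ι(u) = τ⌊u/τ⌋ is the most recent synchronization step until u. -/

import Mathlib

/-
Between two synchronizations an agent runs plain asynchronous Q-learning. The temporal-difference
error of `Q_j` is that of `Q*` plus `(Q* - Q_j) + γ (V_j - V*)`, so the drift `Q_u - Q_ι(u)`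
splits into an exponentially weighted average of the TD errors of `Q*`, bounded by `2η` times
their largest partial sum over the window, and a remainder that grows by at most
`η ((1 + γ) ‖Δ_ι(u)‖ + 2γη t)` per step; with `ητ ≤ 1/2` this gives `2ητ ‖Δ_ι(u)‖ + 3η t`.
The TD errors of `Q*` along a trajectory are bounded by `γ / (1 - γ)` and have zero conditional
mean, so Hoeffding's lemma and a Chernoff bound along the Markov chain, with a union bound over
agents, state-action pairs and times, make every window sum at most
`t = γ / (1 - γ) √(2 (τ - 1) log (2|S||A|TK/δ))` with probability `1 - δ`.
-/

open MeasureTheory ProbabilityTheory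

noncomputable def vmax {A : Type*} [Fintype A] (f : A → ℝ) : ℝ := ⨆ a, f a

noncomputable def supNorm {ι : Type*} (f : ι → ℝ) : ℝ := ⨆ i, |f i|

open Finset

/-- Hoeffding's lemma for a finitely supported distribution `μ`. -/
lemma sum_mul_exp_le_exp_sq_of_abs_le {ι : Type*} [Fintype ι] {μ g : ι → ℝ} {c : ℝ}
    (hμ0 : ∀ i, 0 ≤ μ i) (hμ1 : ∑ i, μ i = 1) (hc : 0 < c) (hg : ∀ i, |g i| ≤ c)
    (hcent : ∑ i, μ i * g i = 0) (l : ℝ) :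
    ∑ i, μ i * Real.exp (l * g i) ≤ Real.exp (l ^ 2 * c ^ 2 / 2) := by
  -- convexity puts `exp (l * g i)` below the chord of `exp` over `[-l c, l c]`
  have chord : ∀ i, Real.exp (l * g i) ≤ Real.cosh (l * c) + g i / c * Real.sinh (l * c) := by
    intro i
    obtain ⟨hlo, hhi⟩ := abs_le.1 (hg i)
    have key := convexOn_exp.2 (Set.mem_univ (-(l * c))) (Set.mem_univ (l * c))
      (div_nonneg (by linarith) (by linarith) : 0 ≤ (c - g i) / (2 * c))
      (div_nonneg (by linarith) (by linarith) : 0 ≤ (c + g i) / (2 * c))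
      (by field_simp; ring)
    have harg : (c - g i) / (2 * c) * -(l * c) + (c + g i) / (2 * c) * (l * c) = l * g i := by
      field_simp; ring
    simp only [smul_eq_mul, harg] at key
    refine key.trans (le_of_eq ?_)
    simp only [Real.cosh_eq, Real.sinh_eq]
    field_simp
    ring
  calc ∑ i, μ i * Real.exp (l * g i)
      ≤ ∑ i, μ i * (Real.cosh (l * c) + g i / c * Real.sinh (l * c)) :=
        sum_le_sum fun i _ => mul_le_mul_of_nonneg_left (chord i) (hμ0 i)
    _ = Real.cosh (l * c) * ∑ i, μ i + Real.sinh (l * c) / c * ∑ i, μ i * g i := by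
        rw [mul_sum, mul_sum, ← sum_add_distrib]
        exact sum_congr rfl fun i _ => by ring
    _ = Real.cosh (l * c) := by rw [hμ1, hcent]; ring
    _ ≤ Real.exp (l ^ 2 * c ^ 2 / 2) := by rw [← mul_pow]; exact Real.cosh_le_exp_half_sq _

section PathSums

variable {X : Type*} [Fintype X]

lemma sum_paths_prod_le (W : ℕ → X → X → ℝ) (B : ℕ → ℝ) (hW : ∀ i x x', 0 ≤ W i x x')
    (hB0 : ∀ i, 0 ≤ B i) (hB : ∀ i x, ∑ x', W i x x' ≤ B i) (w : X → ℝ) (hw : ∀ x, 0 ≤ w x) :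
    ∀ n : ℕ, ∑ v : Fin (n + 1) → X, w (v 0) * ∏ i : Fin n, W i (v i.castSucc) (v i.succ)
      ≤ (∑ x, w x) * ∏ i ∈ range n, B i
  | 0 => by
    simp only [univ_eq_empty, prod_empty, mul_one, range_zero]
    exact ((Equiv.funUnique (Fin 1) X).sum_comp w).le
  | n + 1 => by
    rw [← (Fin.snocEquiv fun _ => X).sum_comp, Fintype.sum_prod_type, sum_comm]
    simp only [Fin.snocEquiv_apply, Fin.prod_univ_castSucc, ← Fin.castSucc_zero,
      Fin.succ_castSucc, Fin.succ_last, Fin.snoc_castSucc, Fin.snoc_last, Fin.val_castSucc,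
      Fin.val_last, ← mul_assoc, ← mul_sum, prod_range_succ]
    calc _ ≤ ∑ v : Fin (n + 1) → X, w (v 0) * (∏ i : Fin n, W i (v i.castSucc) (v i.succ)) * B n :=
          sum_le_sum fun v _ => mul_le_mul_of_nonneg_left (hB n _)
            (mul_nonneg (hw _) (prod_nonneg fun i _ => hW _ _ _))
      _ ≤ _ := by
          rw [← sum_mul]
          exact mul_le_mul_of_nonneg_right (sum_paths_prod_le W B hW hB0 hB w hw n) (hB0 n)

lemma sum_paths_filter_lt_le (κ : X → X → ℝ) (hκ : ∀ x x', 0 ≤ κ x x') (y : ℕ → X → X → ℝ)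
    {l : ℝ} (hl : 0 ≤ l) (B : ℕ → ℝ) (hB0 : ∀ i, 0 ≤ B i)
    (hB : ∀ i x, ∑ x', κ x x' * Real.exp (l * y i x x') ≤ B i)
    (w : X → ℝ) (hw : ∀ x, 0 ≤ w x) (t : ℝ) (n : ℕ) :
    ∑ v ∈ univ.filter fun v : Fin (n + 1) → X => t < ∑ i : Fin n, y i (v i.castSucc) (v i.succ),
        w (v 0) * ∏ i : Fin n, κ (v i.castSucc) (v i.succ)
      ≤ Real.exp (-(l * t)) * ((∑ x, w x) * ∏ i ∈ range n, B i) := by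
  set S := fun v : Fin (n + 1) → X => ∑ i : Fin n, y i (v i.castSucc) (v i.succ)
  set p := fun v : Fin (n + 1) → X => w (v 0) * ∏ i : Fin n, κ (v i.castSucc) (v i.succ)
  have hp : ∀ v, 0 ≤ p v := fun v => mul_nonneg (hw _) (prod_nonneg fun i _ => hκ _ _)
  have htilt : ∀ v, p v * Real.exp (l * S v)
      = w (v 0) * ∏ i : Fin n, κ (v i.castSucc) (v i.succ)
          * Real.exp (l * y i (v i.castSucc) (v i.succ)) := by
    intro v
    simp only [p, S, mul_sum, Real.exp_sum, mul_assoc, prod_mul_distrib]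
  calc ∑ v ∈ univ.filter fun v => t < S v, p v
      ≤ ∑ v ∈ univ.filter fun v => t < S v, Real.exp (-(l * t)) * (p v * Real.exp (l * S v)) := by
        refine sum_le_sum fun v hv => ?_
        have h1 : 1 ≤ Real.exp (-(l * t)) * Real.exp (l * S v) := by
          rw [← Real.exp_add]
          exact Real.one_le_exp (by nlinarith [(mem_filter.1 hv).2])
        nlinarith [hp v]
    _ ≤ ∑ v, Real.exp (-(l * t)) * (p v * Real.exp (l * S v)) :=
        sum_le_sum_of_subset_of_nonneg (filter_subset _ _) fun v _ _ =>
          mul_nonneg (Real.exp_pos _).le (mul_nonneg (hp v) (Real.exp_pos _).le)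
    _ ≤ _ := by
        rw [← mul_sum]
        simp only [htilt]
        exact mul_le_mul_of_nonneg_left (sum_paths_prod_le _ B
          (fun i x x' => mul_nonneg (hκ x x') (Real.exp_pos _).le) hB0 hB w hw n)
          (Real.exp_pos _).le

end PathSums

section MarkovChain

variable {X : Type*} [Fintype X] [MeasurableSpace X] [MeasurableSingletonClass X]
  {Ω : Type*} [MeasurableSpace Ω] (μ : Measure Ω) [IsProbabilityMeasure μ]

/-- The law of the path `Z 0, Z 1, …` is that of a Markov chain with transition matrix `κ`. -/
def IsMarkovChain (κ : X → X → ℝ) (Z : ℕ → Ω → X) : Prop :=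
  ∀ (n : ℕ) (x : ℕ → X), μ {ω | ∀ i ≤ n, Z i ω = x i}
    = μ {ω | Z 0 ω = x 0} * ENNReal.ofReal (∏ i ∈ range n, κ (x i) (x (i + 1)))

lemma sum_toReal_measure_fiber_eq_one {Z : Ω → X} (hZ : Measurable Z) :
    ∑ x, (μ {ω | Z ω = x}).toReal = 1 := by
  rw [← ENNReal.toReal_sum fun x _ => measure_ne_top μ _]
  have := sum_measure_preimage_singleton (μ := μ) univ fun x _ => hZ (measurableSet_singleton x)
  simp only [coe_univ, Set.preimage_univ, measure_univ] at this
  exact congrArg ENNReal.toReal this |>.trans ENNReal.toReal_one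

lemma measure_lt_sum_markov_le (κ : X → X → ℝ) (hκ : ∀ x x', 0 ≤ κ x x')
    (Z : ℕ → Ω → X) (hZ0 : Measurable (Z 0))
    (hMarkov : IsMarkovChain μ κ Z)
    (y : ℕ → X → X → ℝ) {l : ℝ} (hl : 0 ≤ l) (B : ℕ → ℝ) (hB0 : ∀ i, 0 ≤ B i)
    (hB : ∀ i x, ∑ x', κ x x' * Real.exp (l * y i x x') ≤ B i) (t : ℝ) (n : ℕ) :
    μ {ω | t < ∑ i ∈ range n, y i (Z i ω) (Z (i + 1) ω)}
      ≤ ENNReal.ofReal (Real.exp (-(l * t)) * ∏ i ∈ range n, B i) := by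
  set q0 : X → ℝ := fun x => (μ {ω | Z 0 ω = x}).toReal
  set bad := univ.filter fun v : Fin (n + 1) → X => t < ∑ i : Fin n, y i (v i.castSucc) (v i.succ)
  set cyl : (Fin (n + 1) → X) → Set Ω := fun v => {ω | ∀ i ≤ n, Z i ω = v (Fin.clamp i n)}
  have hcover : {ω | t < ∑ i ∈ range n, y i (Z i ω) (Z (i + 1) ω)} ⊆ ⋃ v ∈ bad, cyl v := by
    intro ω hω
    refine Set.mem_iUnion₂.2 ⟨fun i => Z i ω, mem_filter.2 ⟨mem_univ _, ?_⟩, fun i hi => ?_⟩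
    · simpa [← Fin.sum_univ_eq_sum_range] using hω
    · simp [Fin.clamp, min_eq_left hi]
  have hcyl : ∀ v, μ (cyl v)
      = ENNReal.ofReal (q0 (v 0) * ∏ i : Fin n, κ (v i.castSucc) (v i.succ)) := by
    intro v
    rw [hMarkov, ENNReal.ofReal_mul ENNReal.toReal_nonneg,
      ENNReal.ofReal_toReal (measure_ne_top _ _), ← Fin.prod_univ_eq_prod_range]
    have hcast : ∀ i : Fin n, Fin.clamp i n = i.castSucc := fun i => Fin.ext (by simp [Fin.clamp])
    have hsucc : ∀ i : Fin n, Fin.clamp (i + 1) n = i.succ := fun i => Fin.ext (by simp [Fin.clamp])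
    simp only [hcast, hsucc]
    rfl
  calc μ {ω | t < ∑ i ∈ range n, y i (Z i ω) (Z (i + 1) ω)}
      ≤ ∑ v ∈ bad, μ (cyl v) := (measure_mono hcover).trans (measure_biUnion_finset_le _ _)
    _ = ENNReal.ofReal (∑ v ∈ bad, q0 (v 0) * ∏ i : Fin n, κ (v i.castSucc) (v i.succ)) := by
        rw [ENNReal.ofReal_sum_of_nonneg fun v _ =>
          mul_nonneg ENNReal.toReal_nonneg (prod_nonneg fun i _ => hκ _ _)]
        exact sum_congr rfl fun v _ => hcyl v
    _ ≤ ENNReal.ofReal (Real.exp (-(l * t)) * ∏ i ∈ range n, B i) := by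
        refine ENNReal.ofReal_le_ofReal ((sum_paths_filter_lt_le κ hκ y hl B hB0 hB q0
          (fun x => ENNReal.toReal_nonneg) t n).trans ?_)
        rw [sum_toReal_measure_fiber_eq_one μ hZ0, one_mul]

lemma measure_lt_sum_Ico_markov_le (κ : X → X → ℝ) (hκ0 : ∀ x x', 0 ≤ κ x x')
    (hκ1 : ∀ x, ∑ x', κ x x' = 1) (Z : ℕ → Ω → X) (hZ0 : Measurable (Z 0))
    (hMarkov : IsMarkovChain μ κ Z)
    (y : X → X → ℝ) {c : ℝ} (hc : 0 ≤ c) (hy : ∀ x x', |y x x'| ≤ c)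
    (hcent : ∀ x, ∑ x', κ x x' * y x x' = 0) {L m : ℝ} (hL : 0 ≤ L) {a n : ℕ}
    (hm : ((n - a : ℕ) : ℝ) ≤ m) :
    μ {ω | c * √(2 * m * L) < ∑ i ∈ Ico a n, y (Z i ω) (Z (i + 1) ω)}
      ≤ ENNReal.ofReal (Real.exp (-L)) := by
  have hIco : (range n).filter (a ≤ ·) = Ico a n := by ext; simp; omega
  by_cases hdeg : c = 0 ∨ m ≤ 0
  · -- the window sum vanishes and so does the threshold
    suffices h : ∀ ω, ∑ i ∈ Ico a n, y (Z i ω) (Z (i + 1) ω) ≤ c * √(2 * m * L) by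
      simp [not_lt.2 (h _)]
    intro ω
    rcases hdeg with hc0 | hm0
    · simp [hc0, abs_nonpos_iff.1 (hc0 ▸ hy _ _)]
    · have : n ≤ a := by
        have := hm.trans hm0; norm_cast at this; omega
      simp [Real.sqrt_eq_zero_of_nonpos (by nlinarith : 2 * m * L ≤ 0), Ico_eq_empty_of_le this]
  obtain ⟨hc0, hm0⟩ := not_or.1 hdeg
  replace hc0 := hc.lt_of_ne' hc0
  replace hm0 := not_le.1 hm0
  set s := √(2 * m * L)
  have hs : s ^ 2 = 2 * m * L := Real.sq_sqrt (by positivity)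
  -- minimizes the Chernoff exponent `-l c s + m l ^ 2 c ^ 2 / 2`
  set l := s / (m * c)
  set E := Real.exp (l ^ 2 * c ^ 2 / 2)
  have hrow : ∀ i x, ∑ x', κ x x' * Real.exp (l * if a ≤ i then y x x' else 0)
      ≤ if a ≤ i then E else 1 := by
    intro i x
    split_ifs
    · exact sum_mul_exp_le_exp_sq_of_abs_le (hκ0 x) (hκ1 x) hc0 (hy x) (hcent x) l
    · simp [hκ1]
  have := measure_lt_sum_markov_le μ κ hκ0 Z hZ0 hMarkov (fun i x x' => if a ≤ i then y x x' else 0)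
    (by positivity) _ (fun i => by split_ifs <;> positivity) hrow (c * s) n
  simp only [← sum_filter, hIco, prod_ite, prod_const_one, mul_one, prod_const] at this
  refine this.trans (ENNReal.ofReal_le_ofReal ?_)
  rw [← Real.exp_nat_mul, ← Real.exp_add, Real.exp_le_exp]
  have hlt : l * (c * s) = 2 * L := by
    simp only [l]; field_simp; linear_combination hs
  have hl2 : l ^ 2 * c ^ 2 / 2 = L / m := by
    simp only [l]; field_simp; linear_combination hs
  have hwindow : ((n - a : ℕ) : ℝ) * (L / m) ≤ L :=
    (mul_le_mul_of_nonneg_right hm (by positivity)).trans_eq (by field_simp)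
  rw [Nat.card_Ico, hlt, hl2]
  linarith

lemma measure_lt_abs_sum_Ico_markov_le (κ : X → X → ℝ) (hκ0 : ∀ x x', 0 ≤ κ x x')
    (hκ1 : ∀ x, ∑ x', κ x x' = 1) (Z : ℕ → Ω → X) (hZ0 : Measurable (Z 0))
    (hMarkov : IsMarkovChain μ κ Z)
    (y : X → X → ℝ) {c : ℝ} (hc : 0 ≤ c) (hy : ∀ x x', |y x x'| ≤ c)
    (hcent : ∀ x, ∑ x', κ x x' * y x x' = 0) {L m : ℝ} (hL : 0 ≤ L) {a n : ℕ}
    (hm : ((n - a : ℕ) : ℝ) ≤ m) :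
    μ {ω | c * √(2 * m * L) < |∑ i ∈ Ico a n, y (Z i ω) (Z (i + 1) ω)|}
      ≤ ENNReal.ofReal (2 * Real.exp (-L)) := by
  have hsplit : {ω | c * √(2 * m * L) < |∑ i ∈ Ico a n, y (Z i ω) (Z (i + 1) ω)|}
      ⊆ {ω | c * √(2 * m * L) < ∑ i ∈ Ico a n, y (Z i ω) (Z (i + 1) ω)}
        ∪ {ω | c * √(2 * m * L) < ∑ i ∈ Ico a n, (-y) (Z i ω) (Z (i + 1) ω)} := by
    intro ω hω
    simpa [sum_neg_distrib, lt_abs] using hω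
  rw [two_mul (Real.exp _), ENNReal.ofReal_add (Real.exp_pos _).le (Real.exp_pos _).le]
  refine (measure_mono hsplit).trans ((measure_union_le _ _).trans (add_le_add ?_ ?_))
  · exact measure_lt_sum_Ico_markov_le μ κ hκ0 hκ1 Z hZ0 hMarkov y hc hy hcent hL hm
  · refine measure_lt_sum_Ico_markov_le μ κ hκ0 hκ1 Z hZ0 hMarkov (-y) hc
      (fun x x' => by simpa using hy x x') (fun x => ?_) hL hm
    simp [mul_neg, sum_neg_distrib, hcent x]

end MarkovChain

lemma ofReal_one_sub_le_measure_of_forall_notMem {Ω : Type*} [MeasurableSpace Ω]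
    (μ : Measure Ω) [IsProbabilityMeasure μ] {ι : Type*} [Fintype ι] (bad : ι → Set Ω)
    {ε δ : ℝ} (hδ : 0 ≤ δ) (hbad : ∀ i, μ (bad i) ≤ ENNReal.ofReal ε)
    (hε : Fintype.card ι * ε ≤ δ) {s : Set Ω} (hs : ∀ ω, (∀ i, ω ∉ bad i) → ω ∈ s) :
    ENNReal.ofReal (1 - δ) ≤ μ s := by
  have hcompl : μ sᶜ ≤ ENNReal.ofReal δ := by
    calc μ sᶜ ≤ μ (⋃ i, bad i) := measure_mono fun ω hω => by
          by_contra h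
          exact hω (hs ω fun i hi => h (Set.mem_iUnion.2 ⟨i, hi⟩))
      _ ≤ ∑ i, μ (bad i) := measure_iUnion_fintype_le _ _
      _ ≤ ∑ _i : ι, ENNReal.ofReal ε := sum_le_sum fun i _ => hbad i
      _ ≤ ENNReal.ofReal δ := by
          rw [sum_const, card_univ, nsmul_eq_mul, ← ENNReal.ofReal_natCast,
            ← ENNReal.ofReal_mul (Nat.cast_nonneg _)]
          exact ENNReal.ofReal_le_ofReal hε
  rw [ENNReal.ofReal_sub _ hδ, ENNReal.ofReal_one, tsub_le_iff_right]
  calc 1 = μ Set.univ := measure_univ.symm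
    _ ≤ μ s + μ sᶜ := by rw [← Set.union_compl_self s]; exact measure_union_le _ _
    _ ≤ μ s + ENNReal.ofReal δ := add_le_add_right hcompl _

section SupNorm

variable {ι : Type*}

lemma abs_le_supNorm [Finite ι] (f : ι → ℝ) (i : ι) : |f i| ≤ supNorm f :=
  le_ciSup (f := fun i => |f i|) (Set.finite_range _).bddAbove i

lemma supNorm_le [Nonempty ι] {f : ι → ℝ} {B : ℝ} (h : ∀ i, |f i| ≤ B) : supNorm f ≤ B :=
  ciSup_le h

lemma supNorm_nonneg (f : ι → ℝ) : 0 ≤ supNorm f :=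
  Real.iSup_nonneg fun _ => abs_nonneg _

variable [Fintype ι]

lemma le_vmax (f : ι → ℝ) (i : ι) : f i ≤ vmax f :=
  le_ciSup (Set.finite_range _).bddAbove i

lemma vmax_le [Nonempty ι] {f : ι → ℝ} {B : ℝ} (h : ∀ i, f i ≤ B) : vmax f ≤ B :=
  ciSup_le h

lemma vmax_mem_Icc [Nonempty ι] {f : ι → ℝ} {lo hi : ℝ} (h : ∀ i, f i ∈ Set.Icc lo hi) :
    vmax f ∈ Set.Icc lo hi :=
  ⟨(h (Classical.arbitrary ι)).1.trans (le_vmax f _), vmax_le fun i => (h i).2⟩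

lemma abs_vmax_sub_vmax_le [Nonempty ι] {f g : ι → ℝ} {B : ℝ} (h : ∀ i, |f i - g i| ≤ B) :
    |vmax f - vmax g| ≤ B := by
  have hfg : vmax f ≤ vmax g + B :=
    vmax_le fun i => by linarith [(abs_le.1 (h i)).2, le_vmax g i]
  have hgf : vmax g ≤ vmax f + B :=
    vmax_le fun i => by linarith [(abs_le.1 (h i)).1, le_vmax f i]
  exact abs_le.2 ⟨by linarith, by linarith⟩

lemma sum_mul_mem_Icc {p f : ι → ℝ} (hp0 : ∀ i, 0 ≤ p i) (hp1 : ∑ i, p i = 1) {lo hi : ℝ}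
    (hf : ∀ i, f i ∈ Set.Icc lo hi) : ∑ i, p i * f i ∈ Set.Icc lo hi := by
  constructor
  · calc lo = ∑ i, p i * lo := by rw [← sum_mul, hp1, one_mul]
      _ ≤ _ := sum_le_sum fun i _ => mul_le_mul_of_nonneg_left (hf i).1 (hp0 i)
  · calc ∑ i, p i * f i ≤ ∑ i, p i * hi :=
          sum_le_sum fun i _ => mul_le_mul_of_nonneg_left (hf i).2 (hp0 i)
      _ = hi := by rw [← sum_mul, hp1, one_mul]

end SupNorm

section Bellman

variable {S A : Type*} [Fintype S] [Fintype A] {P : S × A → S → ℝ} {r : S × A → ℝ} {γ : ℝ}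

noncomputable def tdError (r : S × A → ℝ) (γ : ℝ) (Q : S × A → ℝ) (sa : S × A) (s' : S) : ℝ :=
  r sa + γ * vmax (fun a' => Q (s', a')) - Q sa

lemma bellman_fixedPoint_mem_Icc [Nonempty S] [Nonempty A] (hP0 : ∀ sa s', 0 ≤ P sa s')
    (hP1 : ∀ sa, ∑ s', P sa s' = 1) {Q : S × A → ℝ}
    (hQ : ∀ sa, Q sa = r sa + γ * ∑ s', P sa s' * vmax fun a' => Q (s', a'))
    (hr : ∀ sa, r sa ∈ Set.Icc (0 : ℝ) 1) (hγ : γ ∈ Set.Ico (0 : ℝ) 1) (sa : S × A) :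
    Q sa ∈ Set.Icc 0 (1 / (1 - γ)) := by
  obtain ⟨lo, -, hlo⟩ := exists_min_image univ Q univ_nonempty
  obtain ⟨hi, -, hhi⟩ := exists_max_image univ Q univ_nonempty
  have hPV : ∀ sa, ∑ s', P sa s' * vmax (fun a' => Q (s', a')) ∈ Set.Icc (Q lo) (Q hi) :=
    fun sa => sum_mul_mem_Icc (hP0 sa) (hP1 sa) fun s' =>
      vmax_mem_Icc fun a' => ⟨hlo _ (mem_univ _), hhi _ (mem_univ _)⟩
  obtain ⟨hγ0, hγ1⟩ := hγ
  have hlo0 : 0 ≤ Q lo := by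
    nlinarith [hQ lo, (hr lo).1, mul_le_mul_of_nonneg_left (hPV lo).1 hγ0]
  have hhi1 : Q hi ≤ 1 / (1 - γ) := by
    rw [le_div_iff₀ (by linarith)]
    nlinarith [hQ hi, (hr hi).2, mul_le_mul_of_nonneg_left (hPV hi).2 hγ0]
  exact ⟨hlo0.trans (hlo sa (mem_univ _)), (hhi sa (mem_univ _)).trans hhi1⟩

lemma abs_tdError_le [Nonempty S] [Nonempty A] (hP0 : ∀ sa s', 0 ≤ P sa s')
    (hP1 : ∀ sa, ∑ s', P sa s' = 1) {Q : S × A → ℝ}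
    (hQ : ∀ sa, Q sa = r sa + γ * ∑ s', P sa s' * vmax fun a' => Q (s', a'))
    (hr : ∀ sa, r sa ∈ Set.Icc (0 : ℝ) 1) (hγ : γ ∈ Set.Ico (0 : ℝ) 1) (sa : S × A) (s' : S) :
    |tdError r γ Q sa s'| ≤ γ / (1 - γ) := by
  have hV : ∀ s, vmax (fun a => Q (s, a)) ∈ Set.Icc 0 (1 / (1 - γ)) := fun s =>
    vmax_mem_Icc fun a => bellman_fixedPoint_mem_Icc hP0 hP1 hQ hr hγ (s, a)
  have hPV := sum_mul_mem_Icc (hP0 sa) (hP1 sa) hV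
  have htd : tdError r γ Q sa s'
      = γ * (vmax (fun a' => Q (s', a')) - ∑ s'', P sa s'' * vmax fun a' => Q (s'', a')) := by
    rw [tdError, hQ sa]; ring
  rw [htd, abs_mul, abs_of_nonneg hγ.1, div_eq_mul_one_div]
  exact mul_le_mul_of_nonneg_left
    (abs_sub_le_iff.2 ⟨by linarith [(hV s').2, hPV.1], by linarith [(hV s').1, hPV.2]⟩) hγ.1

lemma sum_mul_tdError_eq_zero (hP1 : ∀ sa, ∑ s', P sa s' = 1) {Q : S × A → ℝ}
    (hQ : ∀ sa, Q sa = r sa + γ * ∑ s', P sa s' * vmax fun a' => Q (s', a')) (sa : S × A) :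
    ∑ s', P sa s' * tdError r γ Q sa s' = 0 := by
  simp only [tdError, mul_sub, mul_add, sum_sub_distrib, sum_add_distrib, ← sum_mul, hP1,
    one_mul, mul_left_comm _ γ, ← mul_sum]
  linarith [hQ sa]

lemma sum_kernel_mul_fst {π : S → A → ℝ} (hπ1 : ∀ s, ∑ a, π s a = 1)
    {κ : S × A → S × A → ℝ} (hκ : ∀ x x', κ x x' = P x x'.1 * π x'.1 x'.2) (x : S × A)
    (f : S → ℝ) : ∑ x', κ x x' * f x'.1 = ∑ s', P x s' * f s' := by
  simp only [hκ, Fintype.sum_prod_type]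
  refine sum_congr rfl fun s' _ => ?_
  rw [← sum_mul, ← mul_sum, hπ1, mul_one]

lemma sum_kernel_mul_ite_tdError_eq_zero [DecidableEq S] [DecidableEq A] {π : S → A → ℝ}
    (hπ1 : ∀ s, ∑ a, π s a = 1) {κ : S × A → S × A → ℝ}
    (hκ : ∀ x x', κ x x' = P x x'.1 * π x'.1 x'.2)
    (hP1 : ∀ sa, ∑ s', P sa s' = 1) {Q : S × A → ℝ}
    (hQ : ∀ sa, Q sa = r sa + γ * ∑ s', P sa s' * vmax fun a' => Q (s', a')) (sa x : S × A) :
    ∑ x', κ x x' * (if sa = x then tdError r γ Q sa x'.1 else 0) = 0 := by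
  split_ifs with h
  · subst h
    rw [sum_kernel_mul_fst hπ1 hκ]
    exact sum_mul_tdError_eq_zero hP1 hQ sa
  · simp

end Bellman

lemma measure_lt_abs_sum_Ico_tdError_le {S A : Type*} [Fintype S] [Fintype A] [Nonempty S]
    [Nonempty A] [DecidableEq S] [DecidableEq A] [MeasurableSpace S] [MeasurableSingletonClass S]
    [MeasurableSpace A] [MeasurableSingletonClass A] {Ω : Type*} [MeasurableSpace Ω]
    (μ : Measure Ω) [IsProbabilityMeasure μ] {P : S × A → S → ℝ} {r : S × A → ℝ} {γ : ℝ}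
    (hP0 : ∀ sa s', 0 ≤ P sa s') (hP1 : ∀ sa, ∑ s', P sa s' = 1)
    (hr : ∀ sa, r sa ∈ Set.Icc (0 : ℝ) 1) (hγ : γ ∈ Set.Ico (0 : ℝ) 1) {Q : S × A → ℝ}
    (hQ : ∀ sa, Q sa = r sa + γ * ∑ s', P sa s' * vmax fun a' => Q (s', a'))
    {π : S → A → ℝ} (hπ0 : ∀ s a, 0 ≤ π s a) (hπ1 : ∀ s, ∑ a, π s a = 1)
    {κ : S × A → S × A → ℝ} (hκ : ∀ x x', κ x x' = P x x'.1 * π x'.1 x'.2)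
    (Z : ℕ → Ω → S × A) (hZ0 : Measurable (Z 0)) (hMarkov : IsMarkovChain μ κ Z)
    {L : ℝ} (hL : 0 ≤ L) {τ : ℕ} (hτ : 0 < τ) (sa : S × A) (u : ℕ) :
    μ {ω | γ / (1 - γ) * √(2 * ((τ : ℝ) - 1) * L) < |∑ i ∈ Ico (τ * (u / τ)) u,
        if sa = Z i ω then tdError r γ Q sa (Z (i + 1) ω).1 else 0|}
      ≤ ENNReal.ofReal (2 * Real.exp (-L)) := by
  have hκ0 : ∀ x x', 0 ≤ κ x x' := fun x x' => by
    rw [hκ]; exact mul_nonneg (hP0 _ _) (hπ0 _ _)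
  have hκ1 : ∀ x, ∑ x', κ x x' = 1 := fun x => by
    simpa [hP1] using sum_kernel_mul_fst hπ1 hκ x fun _ => 1
  have hc : 0 ≤ γ / (1 - γ) := div_nonneg hγ.1 (by linarith [hγ.2])
  have hnoise : ∀ x x' : S × A, |if sa = x then tdError r γ Q sa x'.1 else 0| ≤ γ / (1 - γ) := by
    intro x x'
    split_ifs
    exacts [abs_tdError_le hP0 hP1 hQ hr hγ _ _, by simpa using hc]
  have hwindow : ((u - τ * (u / τ) : ℕ) : ℝ) ≤ τ - 1 := by
    rw [← Nat.mod_eq_sub_mul_div, le_sub_iff_add_le]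
    exact_mod_cast Nat.mod_lt _ hτ
  exact measure_lt_abs_sum_Ico_markov_le μ κ hκ0 hκ1 Z hZ0 hMarkov
    (fun x x' => if sa = x then tdError r γ Q sa x'.1 else 0) hc hnoise
    (sum_kernel_mul_ite_tdError_eq_zero hπ1 hκ hP1 hQ sa) hL hwindow

/-- The part of asynchronous Q-learning with step size `η` that is driven by the noise `z`
(received at the visit times `p`). -/
noncomputable def asyncAvg (η : ℝ) (p : ℕ → Prop) [DecidablePred p] (z : ℕ → ℝ) : ℕ → ℝ
  | 0 => 0
  | j + 1 => if p j then (1 - η) * asyncAvg η p z j + η * z j else asyncAvg η p z j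

lemma abs_asyncAvg_le {η : ℝ} (hη0 : 0 ≤ η) (hη1 : η ≤ 1) (p : ℕ → Prop) [DecidablePred p]
    (z : ℕ → ℝ) {G : ℝ} {J : ℕ}
    (hG : ∀ j ≤ J, |∑ i ∈ range j, if p i then z i else 0| ≤ G) :
    ∀ j ≤ J, |asyncAvg η p z j| ≤ 2 * η * G := by
  set Z := fun j => ∑ i ∈ range j, if p i then z i else 0
  -- each update contracts `asyncAvg - η Z` by `1 - η` and moves it by `η ^ 2 Z`
  have key : ∀ j ≤ J, |asyncAvg η p z j - η * Z j| ≤ η * G := by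
    intro j hj
    induction j with
    | zero => simpa [asyncAvg, Z] using mul_nonneg hη0 ((abs_nonneg _).trans (hG 0 hj))
    | succ j ih =>
      have ih := ih (by omega)
      have hZ := hG j (by omega)
      by_cases hp : p j
      · have hstep : asyncAvg η p z (j + 1) - η * Z (j + 1)
            = (1 - η) * (asyncAvg η p z j - η * Z j) - η ^ 2 * Z j := by
          simp only [asyncAvg, Z, sum_range_succ, if_pos hp]; ring
        rw [hstep]
        calc _ ≤ (1 - η) * |asyncAvg η p z j - η * Z j| + η ^ 2 * |Z j| := by
              refine (abs_sub _ _).trans_eq ?_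
              rw [abs_mul, abs_mul, abs_of_nonneg (sub_nonneg.2 hη1), abs_of_nonneg (sq_nonneg η)]
          _ ≤ (1 - η) * (η * G) + η ^ 2 * G := by
              gcongr
          _ = η * G := by ring
      · simpa [asyncAvg, Z, sum_range_succ, hp] using ih
  intro j hj
  calc |asyncAvg η p z j| ≤ |asyncAvg η p z j - η * Z j| + |η * Z j| := by
        simpa using abs_add_le (asyncAvg η p z j - η * Z j) (η * Z j)
    _ ≤ η * G + η * G := by
        rw [abs_mul, abs_of_nonneg hη0]
        exact add_le_add (key j hj) (mul_le_mul_of_nonneg_left (hG j hj) hη0)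
    _ = 2 * η * G := by ring

section QLearning

variable {S A : Type*} [Fintype S] [Fintype A] [Nonempty A] [DecidableEq S] [DecidableEq A]
  {η γ : ℝ} {r : S × A → ℝ}

noncomputable def qLearningUpdate (η γ : ℝ) (r Q : S × A → ℝ) (x : S × A) (s' : S) :
    S × A → ℝ :=
  fun sa => if sa = x then (1 - η) * Q sa + η * (r sa + γ * vmax fun a' => Q (s', a')) else Q sa

lemma abs_sub_sub_asyncAvg_le (hη0 : 0 < η) (hη1 : η < 1) (hγ0 : 0 ≤ γ) (hγ1 : γ ≤ 1)
    (Qstar : S × A → ℝ) (Q : ℕ → S × A → ℝ) (x : ℕ → S × A) (s : ℕ → S) {J : ℕ}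
    (hQ : ∀ j < J, Q (j + 1) = qLearningUpdate η γ r (Q j) (x j) (s j)) {t : ℝ} (ht : 0 ≤ t)
    (hM : ∀ sa, ∀ j ≤ J, |asyncAvg η (fun i => sa = x i) (fun i => tdError r γ Qstar sa (s i)) j|
      ≤ 2 * η * t) :
    ∀ j ≤ J, ∀ sa, |Q j sa - Q 0 sa
        - asyncAvg η (fun i => sa = x i) (fun i => tdError r γ Qstar sa (s i)) j|
      ≤ j * η * ((1 + γ) * supNorm (fun sa => Qstar sa - Q 0 sa) + 2 * γ * η * t) := by
  set Δ := supNorm fun sa => Qstar sa - Q 0 sa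
  set C := (1 + γ) * Δ + 2 * γ * η * t
  set M := fun sa => asyncAvg η (fun i => sa = x i) (fun i => tdError r γ Qstar sa (s i))
  have hΔ : ∀ sa, |Qstar sa - Q 0 sa| ≤ Δ := abs_le_supNorm _
  have hC : 0 ≤ C := by
    have := supNorm_nonneg fun sa => Qstar sa - Q 0 sa
    positivity
  intro j hj
  induction j with
  | zero => simp [asyncAvg]
  | succ j ih =>
    intro sa
    have ih := ih (by omega)
    by_cases hsa : sa = x j
    · have hV : |vmax (fun a' => Q j (s j, a')) - vmax (fun a' => Qstar (s j, a'))|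
          ≤ j * η * C + 2 * η * t + Δ := abs_vmax_sub_vmax_le fun a' => by
        have h1 := abs_le.1 (ih (s j, a'))
        have h2 := abs_le.1 (hM (s j, a') j (by omega))
        have h3 := abs_le.1 (hΔ (s j, a'))
        exact abs_le.2 ⟨by linarith, by linarith⟩
      have hstep : Q (j + 1) sa - Q 0 sa - M sa (j + 1)
          = (1 - η) * (Q j sa - Q 0 sa - M sa j) + η * ((Qstar sa - Q 0 sa)
            + γ * (vmax (fun a' => Q j (s j, a')) - vmax (fun a' => Qstar (s j, a')))) := by
        rw [hQ j (by omega)]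
        simp only [qLearningUpdate, M, asyncAvg, if_pos hsa, tdError]
        ring
      rw [hstep]
      have h1 := abs_le.1 (ih sa)
      have h2 := abs_le.1 (hΔ sa)
      have h3 := abs_le.1 hV
      have hη' : 0 ≤ 1 - η := by linarith
      -- `(1 - η) j η C + η (Δ + γ (j η C + 2 η t + Δ)) ≤ (j + 1) η C` because `γ ≤ 1`
      push_cast
      refine abs_le.2 ⟨?_, ?_⟩ <;>
        nlinarith [mul_le_mul_of_nonneg_left h1.1 hη', mul_le_mul_of_nonneg_left h1.2 hη',
          mul_le_mul_of_nonneg_left h3.1 hγ0, mul_le_mul_of_nonneg_left h3.2 hγ0,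
          mul_nonneg (mul_nonneg hη0.le (sub_nonneg.2 hγ1))
            (mul_nonneg (Nat.cast_nonneg j) (mul_nonneg hη0.le hC))]
    · have hstep : Q (j + 1) sa - Q 0 sa - M sa (j + 1) = Q j sa - Q 0 sa - M sa j := by
        rw [hQ j (by omega)]
        simp only [qLearningUpdate, M, asyncAvg, if_neg hsa]
      rw [hstep]
      push_cast
      nlinarith [ih sa, mul_nonneg hη0.le hC]

lemma abs_sub_le_of_qLearningUpdate (hη0 : 0 < η) (hη1 : η < 1) (hγ0 : 0 ≤ γ) (hγ1 : γ ≤ 1)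
    (Qstar : S × A → ℝ) (Q : ℕ → S × A → ℝ) (x : ℕ → S × A) (s : ℕ → S) {J : ℕ}
    (hQ : ∀ j < J, Q (j + 1) = qLearningUpdate η γ r (Q j) (x j) (s j)) {t : ℝ} (ht : 0 ≤ t)
    (hnoise : ∀ sa, ∀ j ≤ J,
      |∑ i ∈ range j, if sa = x i then tdError r γ Qstar sa (s i) else 0| ≤ t) (sa : S × A) :
    |Q J sa - Q 0 sa|
      ≤ J * η * ((1 + γ) * supNorm (fun sa => Qstar sa - Q 0 sa) + 2 * γ * η * t) + 2 * η * t := by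
  have hM := fun sa => abs_asyncAvg_le hη0.le hη1.le _ _ (hnoise sa)
  have h1 := abs_le.1 (abs_sub_sub_asyncAvg_le hη0 hη1 hγ0 hγ1 Qstar Q x s hQ ht hM J le_rfl sa)
  have h2 := abs_le.1 (hM sa J le_rfl)
  exact abs_le.2 ⟨by linarith, by linarith⟩

lemma supNorm_sub_le_of_local_updates [Nonempty S] (hη0 : 0 < η) (hη1 : η < 1) (hγ0 : 0 ≤ γ)
    (hγ1 : γ < 1) {τ : ℕ} (hτ : 0 < τ) (hητ : η * τ ≤ 1 / 2) (Qstar : S × A → ℝ)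
    (Q : ℕ → S × A → ℝ) (x : ℕ → S × A)
    (hQ : ∀ t, ¬ τ ∣ t + 1 → Q (t + 1) = qLearningUpdate η γ r (Q t) (x t) (x (t + 1)).1)
    {u : ℕ} {t : ℝ} (ht : 0 ≤ t)
    (hnoise : ∀ sa, ∀ u' ≤ u, |∑ i ∈ Ico (τ * (u' / τ)) u',
      if sa = x i then tdError r γ Qstar sa (x (i + 1)).1 else 0| ≤ t) :
    supNorm (fun sa => Q u sa - Q (τ * (u / τ)) sa)
      ≤ 2 * η * τ * supNorm (fun sa => Qstar sa - Q (τ * (u / τ)) sa) + 3 * η * t := by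
  set a := τ * (u / τ)
  set Δ := supNorm fun sa => Qstar sa - Q a sa
  set J := u % τ
  have hJτ : J < τ := Nat.mod_lt _ hτ
  have hu : u = a + J := (Nat.div_add_mod u τ).symm
  have hdiv : ∀ j < τ, (a + j) / τ = u / τ := fun j hj => by
    rw [Nat.mul_add_div hτ, Nat.div_eq_of_lt hj, add_zero]
  have hQ' : ∀ j < J, Q (a + (j + 1))
      = qLearningUpdate η γ r (Q (a + j)) (x (a + j)) (x (a + j + 1)).1 := by
    intro j hj
    refine hQ (a + j) fun hdvd => ?_
    have : τ ∣ j + 1 := (Nat.dvd_add_right (Dvd.intro _ rfl)).1 (by rwa [← add_assoc])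
    have := Nat.le_of_dvd (Nat.succ_pos j) this
    omega
  have hnoise' : ∀ sa, ∀ j ≤ J, |∑ i ∈ range j,
      if sa = x (a + i) then tdError r γ Qstar sa (x (a + i + 1)).1 else 0| ≤ t := by
    intro sa j hj
    have := hnoise sa (a + j) (by omega)
    rwa [hdiv j (by omega), sum_Ico_eq_sum_range, Nat.add_sub_cancel_left] at this
  have hD := abs_sub_le_of_qLearningUpdate hη0 hη1 hγ0 hγ1.le Qstar (fun j => Q (a + j))
    (fun j => x (a + j)) (fun j => (x (a + j + 1)).1) hQ' ht hnoise'
  simp only [add_zero, ← hu] at hD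
  have hJ : (J : ℝ) + 1 ≤ τ := by exact_mod_cast hJτ
  have hJη : J * η ≤ 1 / 2 := by nlinarith
  have hΔ : 0 ≤ Δ := supNorm_nonneg _
  have hbound : J * η * ((1 + γ) * Δ + 2 * γ * η * t) + 2 * η * t
      ≤ 2 * η * τ * Δ + 3 * η * t := by
    have h1 : J * η * ((1 + γ) * Δ) ≤ 2 * η * τ * Δ := by
      have : (J : ℝ) * (1 + γ) ≤ 2 * τ := by nlinarith
      nlinarith [mul_le_mul_of_nonneg_right this (mul_nonneg hη0.le hΔ)]
    have h2 : J * η * (2 * γ * η * t) ≤ η * t := by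
      have := mul_le_mul_of_nonneg_right hJη (by positivity : 0 ≤ 2 * γ * η * t)
      nlinarith [mul_le_mul_of_nonneg_right hγ1.le (mul_nonneg hη0.le ht)]
    nlinarith
  exact supNorm_le fun sa => (hD sa).trans hbound

end QLearning

lemma three_mul_mul_sqrt_le {η c m : ℝ} (hη : 0 ≤ η) (hc : 0 ≤ c) (hm : 0 ≤ m) (L : ℝ) :
    3 * η * (c * √(2 * m * L)) ≤ 8 * c * η * √m * √L := by
  have hsqrt2 : √2 ≤ 3 / 2 := by
    nlinarith [Real.sq_sqrt (zero_le_two : (0 : ℝ) ≤ 2), Real.sqrt_nonneg 2]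
  rw [Real.sqrt_mul (by positivity), Real.sqrt_mul zero_le_two]
  have : 0 ≤ η * c * √m * √L := by positivity
  nlinarith

theorem fedAsynQ_drift_bound_general
    {S A : Type*} [Fintype S] [Fintype A] [Nonempty S] [Nonempty A]
    [DecidableEq S] [DecidableEq A]
    [MeasurableSpace S] [MeasurableSingletonClass S]
    [MeasurableSpace A] [MeasurableSingletonClass A]
    {Ω : Type*} [MeasurableSpace Ω] (Pr : Measure Ω) [IsProbabilityMeasure Pr]
    -- the MDP
    (P : S × A → S → ℝ) (r : S × A → ℝ) (γ : ℝ)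
    (hP0 : ∀ sa s', 0 ≤ P sa s') (hP1 : ∀ sa, ∑ s', P sa s' = 1)
    (hr : ∀ sa, r sa ∈ Set.Icc (0 : ℝ) 1) (hγ : γ ∈ Set.Ico (0 : ℝ) 1)
    -- the optimal Q-function (Bellman fixed point)
    (Qstar : S × A → ℝ)
    (hQstar : ∀ sa, Qstar sa
        = r sa + γ * ∑ s', P sa s' * vmax fun a' => Qstar (s', a'))
    -- algorithm parameters
    (K : ℕ) (hK : 0 < K) (T τ : ℕ) (hT : 0 < T) (hτ : 0 < τ)
    (η : ℝ) (hη0 : 0 < η) (hη1 : η < 1)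
    (δ : ℝ) (hδ : δ ∈ Set.Ioo (0 : ℝ) 1)
    -- behavior policies and the induced Markov chains on `S × A`
    (πb : Fin K → S → A → ℝ)
    (hπb0 : ∀ k s a, 0 ≤ πb k s a) (hπb1 : ∀ k s, ∑ a, πb k s a = 1)
    (κ : Fin K → S × A → S × A → ℝ)
    (hκ : ∀ k sa sa', κ k sa sa' = P sa sa'.1 * πb k sa'.1 sa'.2)
    -- the Markovian trajectories of the agents
    (traj : Fin K → ℕ → Ω → S × A)
    (htraj_meas : ∀ k t, Measurable (traj k t))
    (hMarkov : ∀ (k : Fin K) (n : ℕ) (x : ℕ → S × A),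
      Pr {ω | ∀ i ≤ n, traj k i ω = x i}
        = Pr {ω | traj k 0 ω = x 0}
            * ENNReal.ofReal (∏ i ∈ Finset.range n, κ k (x i) (x (i + 1))))
    -- the iterates of FedAsynQ with arbitrary nonnegative aggregation weights
    (α : ℕ → Fin K → S × A → Ω → ℝ)
    (Q Qhalf : ℕ → Fin K → S × A → Ω → ℝ)
    (hupd : ∀ t k sa ω, Qhalf (t + 1) k sa ω
        = if sa = traj k t ω then
            (1 - η) * Q t k sa ω
              + η * (r sa + γ * vmax fun a' => Q t k ((traj k (t + 1) ω).1, a') ω)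
          else Q t k sa ω)
    (havg : ∀ t k sa ω, Q (t + 1) k sa ω
        = if τ ∣ (t + 1) then
            ∑ k' : Fin K, α (t + 1) k' sa ω * Qhalf (t + 1) k' sa ω
          else Qhalf (t + 1) k sa ω)
    -- the learning rate condition `ητ ≤ 1/2`
    (hητ : η * τ ≤ 1 / 2) :
    Pr {ω | ∀ k : Fin K, ∀ u < T,
          supNorm (fun sa : S × A => Q u k sa ω - Q (τ * (u / τ)) k sa ω)
            ≤ 2 * η * τ
                * supNorm (fun sa : S × A => Qstar sa - Q (τ * (u / τ)) k sa ω)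
              + 8 * γ * η * Real.sqrt ((τ : ℝ) - 1) / (1 - γ)
                * Real.sqrt
                    (Real.log (2 * (Fintype.card S) * (Fintype.card A) * T * K / δ))}
      ≥ ENNReal.ofReal (1 - δ) := by
  set N : ℝ := 2 * (Fintype.card S) * (Fintype.card A) * T * K
  have hN : 2 ≤ N := by
    have : (1 : ℝ) ≤ Fintype.card S * Fintype.card A * T * K := by
      norm_cast; exact Nat.one_le_iff_ne_zero.2 (by positivity)
    linarith
  set L := Real.log (N / δ)
  have hL : 0 ≤ L := Real.log_nonneg ((one_le_div hδ.1).2 (by linarith [hδ.2]))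
  have hc : 0 ≤ γ / (1 - γ) := div_nonneg hγ.1 (sub_nonneg.2 hγ.2.le)
  have hτ1 : (0 : ℝ) ≤ τ - 1 := sub_nonneg.2 (Nat.one_le_cast.2 hτ)
  set t := γ / (1 - γ) * √(2 * ((τ : ℝ) - 1) * L)
  refine ofReal_one_sub_le_measure_of_forall_notMem Pr
    (fun idx : Fin K × (S × A) × Fin T => {ω | t < |∑ i ∈ Finset.Ico (τ * (idx.2.2 / τ)) idx.2.2,
      if idx.2.1 = traj idx.1 i ω then tdError r γ Qstar idx.2.1 (traj idx.1 (i + 1) ω).1 else 0|})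
    hδ.1.le (fun idx => measure_lt_abs_sum_Ico_tdError_le Pr hP0 hP1 hr hγ hQstar (hπb0 idx.1)
      (hπb1 idx.1) (hκ idx.1) _ (htraj_meas idx.1 0) (hMarkov idx.1) hL hτ idx.2.1 idx.2.2)
    ?_ fun ω hω k u hu => ?_
  · rw [Real.exp_neg, Real.exp_log (div_pos (by linarith) hδ.1)]
    simp only [Fintype.card_prod, Fintype.card_fin, N]
    push_cast
    field_simp
    rfl
  · exact (supNorm_sub_le_of_local_updates hη0 hη1 hγ.1 hγ.2 hτ hητ Qstar
      (fun t sa => Q t k sa ω) (traj k · ω)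
      (fun t ht => funext fun sa => by rw [havg, if_neg ht, hupd]; rfl)
      (mul_nonneg hc (Real.sqrt_nonneg _))
      fun sa u' hu' => not_lt.1 (hω (k, sa, ⟨u', by omega⟩))).trans
      (add_le_add le_rfl ((three_mul_mul_sqrt_le hη0.le hc hτ1 L).trans_eq (by ring)))

/-- drift bound between synchronizations for asynchronous local
updates.  If `ητ ≤ 1/2`, then with probability at least `1-δ`, simultaneously for all
agents `k` and all `0 ≤ u < T`,
`‖Q_u^k − Q_{ι(u)}^k‖_∞ ≤ 2ητ‖Δ_{ι(u)}^k‖_∞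
  + (8γη√(τ-1)/(1-γ)) √(log(2|S||A|TK/δ))`, where `ι(u) = τ⌊u/τ⌋`. -/
theorem fedAsynQ_drift_bound
    {S A : Type*} [Fintype S] [Fintype A] [Nonempty S] [Nonempty A]
    [DecidableEq S] [DecidableEq A]
    [MeasurableSpace S] [MeasurableSingletonClass S]
    [MeasurableSpace A] [MeasurableSingletonClass A]
    {Ω : Type*} [MeasurableSpace Ω] (Pr : Measure Ω) [IsProbabilityMeasure Pr]
    -- the MDP
    (P : S × A → S → ℝ) (r : S × A → ℝ) (γ : ℝ)
    (hP0 : ∀ sa s', 0 ≤ P sa s') (hP1 : ∀ sa, ∑ s', P sa s' = 1)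
    (hr : ∀ sa, r sa ∈ Set.Icc (0 : ℝ) 1) (hγ : γ ∈ Set.Ico (0 : ℝ) 1)
    -- the optimal Q-function (Bellman fixed point)
    (Qstar : S × A → ℝ)
    (hQstar : ∀ sa, Qstar sa
        = r sa + γ * ∑ s', P sa s' * vmax fun a' => Qstar (s', a'))
    -- algorithm parameters
    (K : ℕ) (hK : 0 < K) (T τ : ℕ) (hT : 0 < T) (hτ : 0 < τ) (hτT : τ ∣ T)
    (η : ℝ) (hη0 : 0 < η) (hη1 : η < 1)
    (δ : ℝ) (hδ : δ ∈ Set.Ioo (0 : ℝ) 1)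
    -- behavior policies and the induced Markov chains on `S × A`
    (πb : Fin K → S → A → ℝ)
    (hπb0 : ∀ k s a, 0 ≤ πb k s a) (hπb1 : ∀ k s, ∑ a, πb k s a = 1)
    (κ : Fin K → S × A → S × A → ℝ)
    (hκ : ∀ k sa sa', κ k sa sa' = P sa sa'.1 * πb k sa'.1 sa'.2)
    -- the Markovian trajectories of the agents
    (traj : Fin K → ℕ → Ω → S × A)
    (htraj_meas : ∀ k t, Measurable (traj k t))
    (hMarkov : ∀ (k : Fin K) (n : ℕ) (x : ℕ → S × A),
      Pr {ω | ∀ i ≤ n, traj k i ω = x i}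
        = Pr {ω | traj k 0 ω = x 0}
            * ENNReal.ofReal (∏ i ∈ Finset.range n, κ k (x i) (x (i + 1))))
    (hindep : iIndepFun (fun (k : Fin K) ω t => traj k t ω) Pr)
    -- the iterates of FedAsynQ with arbitrary nonnegative aggregation weights
    (α : ℕ → Fin K → S × A → Ω → ℝ)
    (hα0 : ∀ t k sa ω, 0 ≤ α t k sa ω)
    (hα1 : ∀ t sa ω, ∑ k : Fin K, α t k sa ω = 1)
    (Q0 : S × A → ℝ) (hQ0 : ∀ sa, Q0 sa ∈ Set.Icc (0 : ℝ) (1 / (1 - γ)))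
    (Q Qhalf : ℕ → Fin K → S × A → Ω → ℝ)
    (hinit : ∀ k sa ω, Q 0 k sa ω = Q0 sa)
    (hupd : ∀ t k sa ω, Qhalf (t + 1) k sa ω
        = if sa = traj k t ω then
            (1 - η) * Q t k sa ω
              + η * (r sa + γ * vmax fun a' => Q t k ((traj k (t + 1) ω).1, a') ω)
          else Q t k sa ω)
    (havg : ∀ t k sa ω, Q (t + 1) k sa ω
        = if τ ∣ (t + 1) then
            ∑ k' : Fin K, α (t + 1) k' sa ω * Qhalf (t + 1) k' sa ω
          else Qhalf (t + 1) k sa ω)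
    -- the learning rate condition `ητ ≤ 1/2`
    (hητ : η * τ ≤ 1 / 2) :
    Pr {ω | ∀ k : Fin K, ∀ u < T,
          supNorm (fun sa : S × A => Q u k sa ω - Q (τ * (u / τ)) k sa ω)
            ≤ 2 * η * τ
                * supNorm (fun sa : S × A => Qstar sa - Q (τ * (u / τ)) k sa ω)
              + 8 * γ * η * Real.sqrt ((τ : ℝ) - 1) / (1 - γ)
                * Real.sqrt
                    (Real.log (2 * (Fintype.card S) * (Fintype.card A) * T * K / δ))}
      ≥ ENNReal.ofReal (1 - δ) :=
  fedAsynQ_drift_bound_general Pr P r γ hP0 hP1 hr hγ Qstar hQstar K hK T τ hT hτ η hη0 hη1 δ hδ πb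
    hπb0 hπb1 κ hκ traj htraj_meas hMarkov α Q Qhalf hupd havg hητ
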